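/- ∑_{k=1}^∞ 8^k/(k·3^k·C(3k,k)) = (2/7)·(π√3 − log 3). -/

import Mathlib

/-!
The Beta integral gives `1 / ((k + 1) * C(3k + 3, k + 1)) = ∫₀¹ x ^ k (1 - x) ^ (2k + 2)`, so the
`k`-th term of the series is `∫₀¹ (8/3) (1 - x)² r(x) ^ k` with `r(x) = (8/3) x (1 - x)² ≤ 32/81`.
Dominated convergence lets the geometric series be summed under the integral, leaving the
rational integral `∫₀¹ 8 (1 - x)² / ((3 - 2x)(4x² - 2x + 1))`, which partial fractions turn into
logarithms and an arctangent.
-/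

open scoped Nat
open Real

theorem integral_pow_mul_one_sub_pow (m n : ℕ) :
    ∫ x in (0:ℝ)..1, x ^ m * (1 - x) ^ n = (m ! * n ! : ℝ) / (m + n + 1)! := by
  have hbeta := Complex.betaIntegral_eq_Gamma_mul_div (m + 1) (n + 1)
    (by simp; positivity) (by simp; positivity)
  rw [show (m + 1 : ℂ) + (n + 1) = ((m + n + 1 : ℕ) : ℂ) + 1 by push_cast; ring] at hbeta
  simp only [Complex.betaIntegral, add_sub_cancel_right, Complex.cpow_natCast,
    Complex.Gamma_nat_eq_factorial] at hbeta
  apply Complex.ofReal_injective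
  rw [← intervalIntegral.integral_ofReal]
  push_cast
  exact hbeta

theorem integral_pow_mul_one_sub_pow_eq_one_div_choose (m n : ℕ) :
    ∫ x in (0:ℝ)..1, x ^ m * (1 - x) ^ n = 1 / ((m + 1) * (m + n + 1).choose (m + 1)) := by
  have hfact : ((m + n + 1)! : ℝ) = (m + 1) * (m + n + 1).choose (m + 1) * m ! * n ! := by
    have := Nat.choose_mul_factorial_mul_factorial (show m + 1 ≤ m + n + 1 by omega)
    rw [show m + n + 1 - (m + 1) = n by omega, Nat.factorial_succ] at this
    rw [← this]; push_cast; ring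
  rw [integral_pow_mul_one_sub_pow, hfact]
  field_simp

theorem summand_eq_integral (k : ℕ) :
    (8 : ℝ) ^ (k + 1) / ((k + 1 : ℝ) * 3 ^ (k + 1) * (Nat.choose (3 * (k + 1)) (k + 1) : ℝ)) =
      ∫ x in (0:ℝ)..1, 8 / 3 * (1 - x) ^ 2 * (8 / 3 * x * (1 - x) ^ 2) ^ k := by
  have hterm (x : ℝ) : 8 / 3 * (1 - x) ^ 2 * (8 / 3 * x * (1 - x) ^ 2) ^ k =
      (8 / 3) ^ (k + 1) * (x ^ k * (1 - x) ^ (2 * k + 2)) := by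
    rw [mul_pow, mul_pow, ← pow_mul]; ring
  simp_rw [hterm]
  rw [intervalIntegral.integral_const_mul, integral_pow_mul_one_sub_pow_eq_one_div_choose,
    show k + (2 * k + 2) + 1 = 3 * (k + 1) by ring, div_pow]
  field_simp

theorem mul_one_sub_sq_le {x : ℝ} (hx : x ≤ 4 / 3) : x * (1 - x) ^ 2 ≤ 4 / 27 := by
  -- `4/27 - x (1 - x)² = (x - 1/3)² (4/3 - x)`
  nlinarith [mul_nonneg (sq_nonneg (x - 1 / 3)) (sub_nonneg.2 hx)]

theorem hasSum_integrand {x : ℝ} (h0 : 0 ≤ x) (h1 : x ≤ 1) :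
    HasSum (fun k : ℕ => 8 / 3 * (1 - x) ^ 2 * (8 / 3 * x * (1 - x) ^ 2) ^ k)
      (8 * (1 - x) ^ 2 / ((3 - 2 * x) * (4 * x ^ 2 - 2 * x + 1))) := by
  have hr : 8 / 3 * x * (1 - x) ^ 2 < 1 := by
    nlinarith [mul_one_sub_sq_le (show x ≤ 4 / 3 by linarith)]
  have hsum : 8 * (1 - x) ^ 2 / ((3 - 2 * x) * (4 * x ^ 2 - 2 * x + 1)) =
      8 / 3 * (1 - x) ^ 2 * (1 - 8 / 3 * x * (1 - x) ^ 2)⁻¹ := by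
    rw [show (3 - 2 * x) * (4 * x ^ 2 - 2 * x + 1) = 3 * (1 - 8 / 3 * x * (1 - x) ^ 2) by ring]
    field_simp [(sub_pos.2 hr).ne']
  rw [hsum]
  exact (hasSum_geometric_of_lt_one (by positivity) hr).mul_left (8 / 3 * (1 - x) ^ 2)

theorem hasSum_integral_integrand :
    HasSum (fun k : ℕ => ∫ x in (0:ℝ)..1, 8 / 3 * (1 - x) ^ 2 * (8 / 3 * x * (1 - x) ^ 2) ^ k)
      (∫ x in (0:ℝ)..1, 8 * (1 - x) ^ 2 / ((3 - 2 * x) * (4 * x ^ 2 - 2 * x + 1))) := by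
  refine intervalIntegral.hasSum_integral_of_dominated_convergence
    (fun k _ => 8 / 3 * (32 / 81 : ℝ) ^ k)
    (fun k => (by fun_prop : Continuous _).aestronglyMeasurable)
    (fun k => .of_forall fun x hx => ?_) (.of_forall fun _ _ => ?_) intervalIntegrable_const
    (.of_forall fun x hx => ?_)
  · rw [Set.uIoc_of_le zero_le_one] at hx
    obtain ⟨h0, h1⟩ := hx
    have hsq : (1 - x) ^ 2 ≤ 1 := by nlinarith
    have hr : 8 / 3 * x * (1 - x) ^ 2 ≤ 32 / 81 := by
      nlinarith [mul_one_sub_sq_le (show x ≤ 4 / 3 by linarith)]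
    rw [norm_of_nonneg (by positivity)]
    calc _ ≤ 8 / 3 * 1 * (32 / 81 : ℝ) ^ k := by gcongr
      _ = _ := by ring
  · exact (summable_geometric_of_lt_one (by norm_num) (by norm_num)).mul_left _
  · rw [Set.uIoc_of_le zero_le_one] at hx
    exact hasSum_integrand hx.1.le hx.2

theorem hasDerivAt_primitive {x : ℝ} (hx : 3 - 2 * x ≠ 0) :
    HasDerivAt (fun x => (4 * √3 * arctan ((4 * x - 1) / √3) - log (3 - 2 * x)
        - 3 * log (4 * x ^ 2 - 2 * x + 1)) / 7)
      (8 * (1 - x) ^ 2 / ((3 - 2 * x) * (4 * x ^ 2 - 2 * x + 1))) x := by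
  have hq : 4 * x ^ 2 - 2 * x + 1 ≠ 0 := by nlinarith [sq_nonneg (4 * x - 1)]
  have hlin : HasDerivAt (fun x => 3 - 2 * x) (-2) x := by
    simpa using ((hasDerivAt_id x).const_mul 2).const_sub 3
  have hquad : HasDerivAt (fun x => 4 * x ^ 2 - 2 * x + 1) (8 * x - 2) x :=
    ((((hasDerivAt_pow 2 x).const_mul 4).sub ((hasDerivAt_id x).const_mul 2)).add_const 1
      ).congr_deriv (by simp; ring)
  have hatan : HasDerivAt (fun x => (4 * x - 1) / √3) (4 / √3) x := by
    simpa using (((hasDerivAt_id x).const_mul 4).sub_const 1).div_const √3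
  refine ((((hatan.arctan).const_mul (4 * √3)).sub (hlin.log hx)).sub
    ((hquad.log hq).const_mul 3)).div_const 7 |>.congr_deriv ?_
  have hden : 1 + ((4 * x - 1) / √3) ^ 2 = 4 * (4 * x ^ 2 - 2 * x + 1) / 3 := by
    rw [div_pow, sq_sqrt zero_le_three]; ring
  rw [hden]
  -- the denominators in the shape `field_simp` normalises them to
  have : 3 - x * 2 ≠ 0 := by grind
  have : x * (4 * x - 2) + 1 ≠ 0 := by grind
  field_simp
  ring

theorem integral_rational_eq :
    ∫ x in (0:ℝ)..1, 8 * (1 - x) ^ 2 / ((3 - 2 * x) * (4 * x ^ 2 - 2 * x + 1)) =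
      2 / 7 * (π * √3 - log 3) := by
  have hden : ∀ x ∈ Set.uIcc (0:ℝ) 1, (3 - 2 * x) * (4 * x ^ 2 - 2 * x + 1) ≠ 0 := by
    intro x hx
    rw [Set.uIcc_of_le zero_le_one] at hx
    have : 0 < 4 * x ^ 2 - 2 * x + 1 := by nlinarith [sq_nonneg (4 * x - 1)]
    have : 0 < 3 - 2 * x := by linarith [hx.2]
    positivity
  rw [intervalIntegral.integral_eq_sub_of_hasDerivAt
    (fun x hx => hasDerivAt_primitive (left_ne_zero_of_mul (hden x hx)))
    ((ContinuousOn.div (by fun_prop) (by fun_prop) hden).intervalIntegrable)]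
  have h0 : arctan (-1 / √3) = -(π / 6) := by
    rw [neg_div, arctan_neg, one_div, arctan_inv_sqrt_three]
  norm_num [div_sqrt, h0, arctan_sqrt_three]
  ring

theorem stmt_5 :
    ∑' k : ℕ, (8 : ℝ) ^ (k + 1) /
        ((k + 1 : ℝ) * 3 ^ (k + 1) * (Nat.choose (3 * (k + 1)) (k + 1) : ℝ)) =
      (2 / 7) * (Real.pi * Real.sqrt 3 - Real.log 3) := by
  simp_rw [summand_eq_integral]
  rw [hasSum_integral_integrand.tsum_eq, integral_rational_eq]
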